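/- Triangle inequality for the interventional superresolution information loss (ISIL) error under composition of abstractions: D(μ'', β_Y·α_Y·μ·α_X⁺·β_X⁺) ≤ D(μ', α_Y·μ·α_X⁺) + D(μ'', β_Y·μ'·β_X⁺), where γ⁺ = γᵀ·(γ·γᵀ)⁻¹ denotes the pseudo-inverse of an abstraction matrix γ. -/

import Mathlib

open Finset Matrix

noncomputable section

/-- A probability vector on a finite type: nonnegative entries summing to 1. -/
def IsProbVec {X : Type*} [Fintype X] (p : X → ℝ) : Prop :=
  (∀ x, 0 ≤ p x) ∧ ∑ x, p x = 1

/-- Kullback–Leibler divergence, with the convention that terms with `p x = 0`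
contribute `0`. -/
noncomputable def KL {X : Type*} [Fintype X] (p q : X → ℝ) : ℝ :=
  ∑ x, if p x = 0 then 0 else p x * Real.log (p x / q x)

/-- Jensen–Shannon distance. -/
noncomputable def JSD {X : Type*} [Fintype X] (p q : X → ℝ) : ℝ :=
  Real.sqrt ((1 / 2) * KL p (fun x => (p x + q x) / 2)
    + (1 / 2) * KL q (fun x => (p x + q x) / 2))

/-- A column-stochastic matrix: nonnegative entries, every column sums to 1. -/
def IsColStoch {Y X : Type*} [Fintype Y] [Fintype X] (M : Matrix Y X ℝ) : Prop :=
  (∀ y x, 0 ≤ M y x) ∧ ∀ x, ∑ y, M y x = 1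

/-- The sup-JSD distance between two matrices of the same shape:
the maximum over columns of the JSD between corresponding columns. -/
noncomputable def supJSD {Y X : Type*} [Fintype Y] [Fintype X] [Nonempty X]
    (M N : Matrix Y X ℝ) : ℝ :=
  Finset.univ.sup' Finset.univ_nonempty fun x => JSD (fun y => M y x) (fun y => N y x)

/-- An abstraction matrix: entries in {0,1}, every column contains exactly one 1,
and every row contains at least one 1. -/
def IsAbsMatrix {N M : Type*} [Fintype N] [Fintype M] (α : Matrix N M ℝ) : Prop :=
  (∀ j i, α j i = 0 ∨ α j i = 1) ∧ (∀ i, ∃! j, α j i = 1) ∧ (∀ j, ∃ i, α j i = 1)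

/-- The pseudo-inverse `α⁺ = αᵀ·(α·αᵀ)⁻¹` of an abstraction matrix. -/
noncomputable def pinv {N M : Type*} [Fintype N] [Fintype M] [DecidableEq N]
    (α : Matrix N M ℝ) : Matrix M N ℝ :=
  αᵀ * (α * αᵀ)⁻¹


/-!
With `H = negMulLog`, put `jsDiv a b = H ((a + b) / 2) - (H a + H b) / 2`, so that
`JSD p q ^ 2 = ∑ x, jsDiv (p x) (q x)` for nonnegative vectors. Two properties of `jsDiv` carry
the proof.

*Metric.* `√jsDiv` satisfies the triangle inequality on `[0, ∞)`: for `x ≤ y ≤ z` one has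
`√jsDiv (x²) (z²) = √(jsRatio (x / z)) * (z - x)` with `jsRatio` increasing on `[0, 1)`, and
`x / z` is below both `x / y` and `y / z`, so splitting `z - x` at `y` gives the inequality;
if the middle point lies outside, monotonicity of `jsDiv a` on either side of `a` suffices.
Minkowski's inequality lifts this to `JSD`, hence to `supJSD`.

*Data processing.* `jsDiv` is homogeneous and, by the log-sum inequality, subadditive, so
multiplying both matrices by a column-stochastic matrix on either side does not increase `supJSD`.
Abstraction matrices and their pseudo-inverses are column-stochastic.

The theorem is the triangle inequality through `βY μ' βX⁺`, followed by data processing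
`D(βY μ' βX⁺, βY M βX⁺) ≤ D(μ', M)` for `M = αY μ αX⁺`.
-/

open Real

def jsDiv (a b : ℝ) : ℝ :=
  negMulLog ((a + b) / 2) - (negMulLog a + negMulLog b) / 2

lemma jsDiv_comm (a b : ℝ) : jsDiv a b = jsDiv b a := by
  unfold jsDiv; rw [add_comm a b, add_comm (negMulLog a)]

@[simp] lemma jsDiv_self (a : ℝ) : jsDiv a a = 0 := by
  simp [jsDiv]

lemma jsDiv_nonneg {a b : ℝ} (ha : 0 ≤ a) (hb : 0 ≤ b) : 0 ≤ jsDiv a b := by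
  have h := concaveOn_negMulLog.2 (Set.mem_Ici.2 ha) (Set.mem_Ici.2 hb)
    (by norm_num : (0 : ℝ) ≤ 1 / 2) (by norm_num : (0 : ℝ) ≤ 1 / 2) (by norm_num)
  simp only [smul_eq_mul] at h
  unfold jsDiv
  rw [show (a + b) / 2 = 1 / 2 * a + 1 / 2 * b by ring]
  linarith

lemma jsDiv_mul_mul (k a b : ℝ) : jsDiv (k * a) (k * b) = k * jsDiv a b := by
  unfold jsDiv
  rw [← mul_add, mul_div_assoc, negMulLog_mul, negMulLog_mul, negMulLog_mul]
  ring

lemma jsDiv_eq_half_add (a b : ℝ) :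
    jsDiv a b =
      ((a * log a - a * log ((a + b) / 2)) + (b * log b - b * log ((a + b) / 2))) / 2 := by
  simp only [jsDiv, negMulLog]
  ring

lemma continuous_jsDiv_right (a : ℝ) : Continuous (jsDiv a) := by
  unfold jsDiv; fun_prop

lemma sub_le_mul_log_sub_mul_log {x y : ℝ} (hx : 0 ≤ x) (hy : 0 < y) :
    x - y ≤ x * log x - x * log y := by
  rcases hx.eq_or_lt with rfl | hx
  · simpa using hy.le
  have h := mul_le_mul_of_nonneg_left (log_le_sub_one_of_pos (div_pos hy hx)) hx.le
  rw [log_div hy.ne' hx.ne', mul_sub, mul_sub, mul_div_cancel₀ _ hx.ne'] at h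
  linarith

lemma log_sum_inequality {ι : Type*} [Fintype ι] {p m : ι → ℝ} (hp : ∀ i, 0 ≤ p i)
    (hm : ∀ i, 0 ≤ m i) (hpm : ∀ i, m i = 0 → p i = 0) :
    (∑ i, p i) * log (∑ i, p i) - (∑ i, p i) * log (∑ i, m i)
      ≤ ∑ i, (p i * log (p i) - p i * log (m i)) := by
  set P := ∑ i, p i
  set M := ∑ i, m i
  have hP : 0 ≤ P := sum_nonneg fun i _ ↦ hp i
  have hM : 0 ≤ M := sum_nonneg fun i _ ↦ hm i
  rcases hP.eq_or_lt with hP0 | hP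
  · have hp0 := (sum_eq_zero_iff_of_nonneg fun i _ ↦ hp i).1 hP0.symm
    simp [← hP0, hp0]
  have hM : 0 < M := hM.lt_of_ne fun hM0 ↦ hP.ne' <| sum_eq_zero fun i _ ↦
    hpm i ((sum_eq_zero_iff_of_nonneg fun i _ ↦ hm i).1 hM0.symm i (mem_univ i))
  -- rescale `m` to the mass of `p`, then use `x log (x / y) ≥ x - y` termwise
  have key : ∀ i, p i * log (P / M) + (p i - P / M * m i)
      ≤ p i * log (p i) - p i * log (m i) := by
    intro i
    rcases (hm i).eq_or_lt with hmi | hmi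
    · simp [hpm i hmi.symm, ← hmi]
    have h := sub_le_mul_log_sub_mul_log (hp i) (mul_pos (div_pos hP hM) hmi)
    rw [log_mul (div_pos hP hM).ne' hmi.ne'] at h
    linarith
  calc P * log P - P * log M
      = ∑ i, (p i * log (P / M) + (p i - P / M * m i)) := by
        rw [sum_add_distrib, sum_sub_distrib, ← sum_mul, ← mul_sum, div_mul_cancel₀ _ hM.ne',
          log_div hP.ne' hM.ne']
        ring
    _ ≤ _ := sum_le_sum fun i _ ↦ key i

lemma jsDiv_sum_le {ι : Type*} [Fintype ι] {p q : ι → ℝ} (hp : ∀ i, 0 ≤ p i)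
    (hq : ∀ i, 0 ≤ q i) : jsDiv (∑ i, p i) (∑ i, q i) ≤ ∑ i, jsDiv (p i) (q i) := by
  have hm : ∀ i, 0 ≤ (p i + q i) / 2 := fun i ↦ by linarith [hp i, hq i]
  have hp' := log_sum_inequality hp hm fun i h ↦ by linarith [hp i, hq i]
  have hq' := log_sum_inequality hq hm fun i h ↦ by linarith [hp i, hq i]
  rw [← sum_div, sum_add_distrib] at hp' hq'
  simp only [jsDiv_eq_half_add]
  rw [← sum_div, sum_add_distrib]
  linarith

lemma jsDiv_sum_mul_le {ι : Type*} [Fintype ι] {c p q : ι → ℝ} (hc : ∀ i, 0 ≤ c i)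
    (hp : ∀ i, 0 ≤ p i) (hq : ∀ i, 0 ≤ q i) :
    jsDiv (∑ i, c i * p i) (∑ i, c i * q i) ≤ ∑ i, c i * jsDiv (p i) (q i) := by
  simpa only [jsDiv_mul_mul] using
    jsDiv_sum_le (fun i ↦ mul_nonneg (hc i) (hp i)) (fun i ↦ mul_nonneg (hc i) (hq i))

lemma hasDerivAt_jsDiv_right {a b : ℝ} (hb : 0 < b) (hab : 0 < a + b) :
    HasDerivAt (jsDiv a) ((log b - log ((a + b) / 2)) / 2) b := by
  have hmid := (hasDerivAt_negMulLog (by positivity : (a + b) / 2 ≠ 0)).comp b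
    (((hasDerivAt_id b).const_add a).div_const 2)
  refine (hmid.sub (((hasDerivAt_negMulLog hb.ne').const_add (negMulLog a)).div_const 2))
    |>.congr_deriv ?_
  field_simp
  ring

lemma jsDiv_monotoneOn {a : ℝ} (ha : 0 ≤ a) : MonotoneOn (jsDiv a) (Set.Ici a) := by
  refine monotoneOn_of_deriv_nonneg (convex_Ici a) (continuous_jsDiv_right a).continuousOn
    (fun b hb ↦ ?_) fun b hb ↦ ?_
  all_goals rw [interior_Ici, Set.mem_Ioi] at hb
  all_goals have hderiv := hasDerivAt_jsDiv_right (a := a) (by linarith) (by linarith)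
  · exact hderiv.differentiableAt.differentiableWithinAt
  · rw [hderiv.deriv]
    have := log_le_log (by linarith) (by linarith : (a + b) / 2 ≤ b)
    linarith

lemma jsDiv_antitoneOn (a : ℝ) : AntitoneOn (jsDiv a) (Set.Icc 0 a) := by
  refine antitoneOn_of_deriv_nonpos (convex_Icc 0 a) (continuous_jsDiv_right a).continuousOn
    (fun b hb ↦ ?_) fun b hb ↦ ?_
  all_goals rw [interior_Icc, Set.mem_Ioo] at hb
  all_goals have hderiv := hasDerivAt_jsDiv_right (a := a) hb.1 (by linarith)
  · exact hderiv.differentiableAt.differentiableWithinAt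
  · rw [hderiv.deriv]
    have := log_le_log hb.1 (by linarith : b ≤ (a + b) / 2)
    linarith

lemma jsDiv_sq_one (s : ℝ) :
    jsDiv (s ^ 2) 1 = s ^ 2 * log s - (s ^ 2 + 1) / 2 * log ((s ^ 2 + 1) / 2) := by
  simp only [jsDiv, negMulLog, log_pow, log_one]
  push_cast
  ring

lemma hasDerivAt_jsDiv_sq_one {s : ℝ} (hs : 0 < s) :
    HasDerivAt (fun s ↦ jsDiv (s ^ 2) 1) (s * (2 * log s - log ((s ^ 2 + 1) / 2))) s := by
  have hsq : HasDerivAt (fun s : ℝ ↦ (s ^ 2 + 1) / 2) s s := by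
    simpa using ((hasDerivAt_pow 2 s).add_const 1).div_const 2
  have h := ((hasDerivAt_pow 2 s).mul (hasDerivAt_log hs.ne')).sub
    (hsq.mul (hsq.log (by positivity)))
  simp only [jsDiv_sq_one]
  refine h.congr_deriv ?_
  field_simp
  ring

lemma two_mul_log_add_le_log {s : ℝ} (hs0 : 0 < s) (hs1 : s ≤ 1) :
    2 * log s + 2 * (1 - s) / (s ^ 2 + 1) ≤ log ((s ^ 2 + 1) / 2) := by
  let g : ℝ → ℝ := fun s ↦ 2 * log s + 2 * (1 - s) / (s ^ 2 + 1) - log ((s ^ 2 + 1) / 2)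
  have hg : ∀ s, 0 < s →
      HasDerivAt g (2 * (1 - s) ^ 2 * (1 + s) / (s * (s ^ 2 + 1) ^ 2)) s := by
    intro s hs
    have hsq : HasDerivAt (fun s : ℝ ↦ s ^ 2 + 1) (2 * s) s := by
      simpa using (hasDerivAt_pow 2 s).add_const 1
    have h := (((hasDerivAt_log hs.ne').const_mul 2).add
      ((((hasDerivAt_id s).const_sub 1).const_mul 2).div hsq (by positivity))).sub
      ((hsq.div_const 2).log (by positivity))
    refine h.congr_deriv ?_
    simp only [id]
    field_simp
    ring
  have hmono : MonotoneOn g (Set.Ioc 0 1) := by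
    refine monotoneOn_of_deriv_nonneg (convex_Ioc 0 1)
      (fun x hx ↦ (hg x hx.1).continuousAt.continuousWithinAt) (fun x hx ↦ ?_) fun x hx ↦ ?_
    all_goals rw [interior_Ioc, Set.mem_Ioo] at hx
    · exact (hg x hx.1).differentiableAt.differentiableWithinAt
    · rw [(hg x hx.1).deriv]
      have := hx.1
      positivity
  have hg1 : g 1 = 0 := by norm_num [g]
  have := hmono ⟨hs0, hs1⟩ ⟨one_pos, le_rfl⟩ hs1
  simp only [hg1, g] at this
  linarith

lemma one_add_mul_log_le_two_mul_mul_log {s : ℝ} (hs0 : 0 < s) (hs1 : s ≤ 1) :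
    (1 + s) * log ((s ^ 2 + 1) / 2) ≤ 2 * s * log s := by
  let h : ℝ → ℝ := fun s ↦ 2 * s * log s - (1 + s) * log ((s ^ 2 + 1) / 2)
  have hh : ∀ s, 0 < s → HasDerivAt h
      (2 * log s + 2 * (1 - s) / (s ^ 2 + 1) - log ((s ^ 2 + 1) / 2)) s := by
    intro s hs
    have hsq : HasDerivAt (fun s : ℝ ↦ (s ^ 2 + 1) / 2) s s := by
      simpa using ((hasDerivAt_pow 2 s).add_const 1).div_const 2
    have h := (((hasDerivAt_id s).const_mul 2).mul (hasDerivAt_log hs.ne')).sub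
      (((hasDerivAt_id s).const_add 1).mul (hsq.log (by positivity)))
    refine h.congr_deriv ?_
    simp only [id]
    field_simp
    ring
  have hanti : AntitoneOn h (Set.Ioc 0 1) := by
    refine antitoneOn_of_deriv_nonpos (convex_Ioc 0 1)
      (fun x hx ↦ (hh x hx.1).continuousAt.continuousWithinAt) (fun x hx ↦ ?_) fun x hx ↦ ?_
    all_goals rw [interior_Ioc, Set.mem_Ioo] at hx
    · exact (hh x hx.1).differentiableAt.differentiableWithinAt
    · rw [(hh x hx.1).deriv]
      linarith [two_mul_log_add_le_log hx.1 hx.2.le]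
  have hh1 : h 1 = 0 := by norm_num [h]
  have := hanti ⟨hs0, hs1⟩ ⟨one_pos, le_rfl⟩ hs1
  simp only [hh1, h] at this
  linarith

def jsRatio (s : ℝ) : ℝ := jsDiv (s ^ 2) 1 / (1 - s) ^ 2

lemma hasDerivAt_jsRatio {s : ℝ} (hs0 : 0 < s) (hs1 : s < 1) :
    HasDerivAt jsRatio ((2 * s * log s - (1 + s) * log ((s ^ 2 + 1) / 2)) / (1 - s) ^ 3) s := by
  have hs1' : 1 - s ≠ 0 := by linarith
  refine ((hasDerivAt_jsDiv_sq_one hs0).div (((hasDerivAt_id s).const_sub 1).pow 2)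
    (pow_ne_zero 2 hs1')).congr_deriv ?_
  simp only [id, Pi.pow_apply, jsDiv_sq_one]
  field_simp
  ring

lemma jsRatio_monotoneOn : MonotoneOn jsRatio (Set.Ico 0 1) := by
  have hcont : ContinuousOn jsRatio (Set.Ico 0 1) := by
    refine ContinuousOn.div (by unfold jsDiv; fun_prop) (by fun_prop) fun s hs ↦ ?_
    exact pow_ne_zero 2 (by linarith [hs.2])
  refine monotoneOn_of_deriv_nonneg (convex_Ico 0 1) hcont (fun x hx ↦ ?_) fun x hx ↦ ?_
  all_goals rw [interior_Ico, Set.mem_Ioo] at hx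
  · exact (hasDerivAt_jsRatio hx.1 hx.2).differentiableAt.differentiableWithinAt
  · rw [(hasDerivAt_jsRatio hx.1 hx.2).deriv]
    have := one_add_mul_log_le_two_mul_mul_log hx.1 hx.2.le
    have : 0 < 1 - x := by linarith [hx.2]
    apply div_nonneg <;> [linarith; positivity]

lemma sqrt_jsDiv_sq_sq {x y : ℝ} (hx : 0 ≤ x) (hxy : x < y) :
    √(jsDiv (x ^ 2) (y ^ 2)) = √(jsRatio (x / y)) * (y - x) := by
  have hy : 0 < y := hx.trans_lt hxy
  have h : jsDiv (x ^ 2) (y ^ 2) = jsRatio (x / y) * (y - x) ^ 2 := by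
    have hyx : y - x ≠ 0 := by linarith
    rw [show x ^ 2 = y ^ 2 * (x / y) ^ 2 by field_simp, ← mul_one (y ^ 2), mul_assoc,
      jsDiv_mul_mul, one_mul, jsRatio]
    field_simp
  rw [h, sqrt_mul' _ (sq_nonneg _), sqrt_sq (by linarith)]

lemma sqrt_jsDiv_triangle_of_le_of_le {x y z : ℝ} (hx : 0 ≤ x) (hxy : x ≤ y) (hyz : y ≤ z) :
    √(jsDiv (x ^ 2) (z ^ 2)) ≤ √(jsDiv (x ^ 2) (y ^ 2)) + √(jsDiv (y ^ 2) (z ^ 2)) := by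
  rcases hxy.eq_or_lt with rfl | hxy
  · simp
  rcases hyz.eq_or_lt with rfl | hyz
  · simp
  have hy : 0 < y := hx.trans_lt hxy
  have hz : 0 < z := hy.trans hyz
  have hxz : x / z ∈ Set.Ico (0 : ℝ) 1 := ⟨by positivity, (div_lt_one hz).2 (hxy.trans hyz)⟩
  have hxy' : √(jsRatio (x / z)) ≤ √(jsRatio (x / y)) :=
    sqrt_le_sqrt <| jsRatio_monotoneOn hxz ⟨by positivity, (div_lt_one hy).2 hxy⟩
      (div_le_div_of_nonneg_left hx hy hyz.le)
  have hyz' : √(jsRatio (x / z)) ≤ √(jsRatio (y / z)) :=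
    sqrt_le_sqrt <| jsRatio_monotoneOn hxz ⟨by positivity, (div_lt_one hz).2 hyz⟩
      (div_le_div_of_nonneg_right hxy.le hz.le)
  rw [sqrt_jsDiv_sq_sq hx (hxy.trans hyz), sqrt_jsDiv_sq_sq hx hxy, sqrt_jsDiv_sq_sq hy.le hyz]
  nlinarith [mul_le_mul_of_nonneg_right hxy' (sub_nonneg.2 hxy.le),
    mul_le_mul_of_nonneg_right hyz' (sub_nonneg.2 hyz.le)]

lemma sqrt_jsDiv_triangle {a b c : ℝ} (ha : 0 ≤ a) (hb : 0 ≤ b) (hc : 0 ≤ c) :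
    √(jsDiv a c) ≤ √(jsDiv a b) + √(jsDiv b c) := by
  wlog hac : a ≤ c generalizing a c
  · have := this hc ha (le_of_not_ge hac)
    rw [jsDiv_comm c a, jsDiv_comm c b, jsDiv_comm b a] at this
    linarith
  rcases lt_or_ge b a with hba | hab
  · have := jsDiv_antitoneOn c ⟨hb, hba.le.trans hac⟩ ⟨ha, hac⟩ hba.le
    rw [jsDiv_comm c a, jsDiv_comm c b] at this
    linarith [sqrt_le_sqrt this, sqrt_nonneg (jsDiv a b)]
  rcases lt_or_ge c b with hcb | hbc
  · have := jsDiv_monotoneOn ha hac (hac.trans hcb.le) hcb.le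
    linarith [sqrt_le_sqrt this, sqrt_nonneg (jsDiv b c)]
  simpa only [sq_sqrt ha, sq_sqrt hb, sq_sqrt hc] using
    sqrt_jsDiv_triangle_of_le_of_le (sqrt_nonneg a) (sqrt_le_sqrt hab) (sqrt_le_sqrt hbc)

lemma ite_mul_log_div {a m : ℝ} (h : a ≠ 0 → m ≠ 0) :
    (if a = 0 then 0 else a * log (a / m)) = a * log a - a * log m := by
  split_ifs with ha
  · simp [ha]
  · rw [log_div ha (h ha), mul_sub]

lemma mulVec_apply_nonneg {X Y : Type*} [Fintype X] {T : Matrix Y X ℝ}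
    (hT : ∀ y x, 0 ≤ T y x) {p : X → ℝ} (hp : ∀ x, 0 ≤ p x) (y : Y) : 0 ≤ (T *ᵥ p) y :=
  sum_nonneg fun x _ ↦ mul_nonneg (hT y x) (hp x)

section JSD

variable {X Y : Type*} [Fintype X] [Fintype Y]

lemma JSD_eq_sqrt_sum_jsDiv {p q : X → ℝ} (hp : ∀ x, 0 ≤ p x) (hq : ∀ x, 0 ≤ q x) :
    JSD p q = √(∑ x, jsDiv (p x) (q x)) := by
  unfold JSD KL
  rw [mul_sum, mul_sum, ← sum_add_distrib]
  congr 1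
  refine sum_congr rfl fun x _ ↦ ?_
  have hm : (p x + q x) / 2 = 0 → p x = 0 ∧ q x = 0 := fun h ↦
    ⟨by linarith [hp x, hq x], by linarith [hp x, hq x]⟩
  beta_reduce
  rw [ite_mul_log_div fun h h' ↦ h (hm h').1, ite_mul_log_div fun h h' ↦ h (hm h').2,
    jsDiv_eq_half_add]
  ring

lemma JSD_nonneg (p q : X → ℝ) : 0 ≤ JSD p q := sqrt_nonneg _

lemma sqrt_sum_add_sq_le (u v : X → ℝ) :
    √(∑ x, (u x + v x) ^ 2) ≤ √(∑ x, u x ^ 2) + √(∑ x, v x ^ 2) := by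
  simpa [EuclideanSpace.norm_eq] using
    norm_add_le (WithLp.toLp 2 u : EuclideanSpace ℝ X) (WithLp.toLp 2 v)

lemma JSD_triangle {p q r : X → ℝ} (hp : ∀ x, 0 ≤ p x) (hq : ∀ x, 0 ≤ q x)
    (hr : ∀ x, 0 ≤ r x) : JSD p r ≤ JSD p q + JSD q r := by
  rw [JSD_eq_sqrt_sum_jsDiv hp hr, JSD_eq_sqrt_sum_jsDiv hp hq, JSD_eq_sqrt_sum_jsDiv hq hr]
  calc √(∑ x, jsDiv (p x) (r x))
      ≤ √(∑ x, (√(jsDiv (p x) (q x)) + √(jsDiv (q x) (r x))) ^ 2) := by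
        gcongr with x
        rw [← sq_sqrt (jsDiv_nonneg (hp x) (hr x))]
        gcongr
        exact sqrt_jsDiv_triangle (hp x) (hq x) (hr x)
    _ ≤ √(∑ x, √(jsDiv (p x) (q x)) ^ 2) + √(∑ x, √(jsDiv (q x) (r x)) ^ 2) :=
        sqrt_sum_add_sq_le _ _
    _ = _ := by
        simp only [sq_sqrt (jsDiv_nonneg (hp _) (hq _)), sq_sqrt (jsDiv_nonneg (hq _) (hr _))]

lemma JSD_mulVec_le {T : Matrix Y X ℝ} (hT : IsColStoch T) {p q : X → ℝ}
    (hp : ∀ x, 0 ≤ p x) (hq : ∀ x, 0 ≤ q x) : JSD (T *ᵥ p) (T *ᵥ q) ≤ JSD p q := by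
  rw [JSD_eq_sqrt_sum_jsDiv (mulVec_apply_nonneg hT.1 hp) (mulVec_apply_nonneg hT.1 hq),
    JSD_eq_sqrt_sum_jsDiv hp hq]
  gcongr
  calc ∑ y, jsDiv ((T *ᵥ p) y) ((T *ᵥ q) y)
      ≤ ∑ y, ∑ x, T y x * jsDiv (p x) (q x) :=
        sum_le_sum fun y _ ↦ jsDiv_sum_mul_le (hT.1 y) hp hq
    _ = ∑ x, jsDiv (p x) (q x) := by
        rw [sum_comm]
        simp only [← sum_mul, hT.2, one_mul]

lemma JSD_mulVec_sq_le {P Q : Matrix Y X ℝ} (hP : ∀ y x, 0 ≤ P y x)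
    (hQ : ∀ y x, 0 ≤ Q y x) {w : X → ℝ} (hw : ∀ x, 0 ≤ w x) :
    JSD (P *ᵥ w) (Q *ᵥ w) ^ 2 ≤ ∑ x, w x * JSD (fun y ↦ P y x) (fun y ↦ Q y x) ^ 2 := by
  have hPw := mulVec_apply_nonneg hP hw
  have hQw := mulVec_apply_nonneg hQ hw
  simp only [JSD_eq_sqrt_sum_jsDiv hPw hQw, JSD_eq_sqrt_sum_jsDiv (hP · _) (hQ · _)]
  rw [sq_sqrt (sum_nonneg fun y _ ↦ jsDiv_nonneg (hPw y) (hQw y))]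
  simp only [sq_sqrt (sum_nonneg fun y _ ↦ jsDiv_nonneg (hP y _) (hQ y _)), mul_sum]
  rw [sum_comm]
  refine sum_le_sum fun y _ ↦ ?_
  simp only [mulVec, dotProduct, mul_comm (P y _), mul_comm (Q y _)]
  exact jsDiv_sum_mul_le hw (hP y) (hQ y)

end JSD

section supJSD

variable {X Y Z W : Type*} [Fintype X] [Fintype Y] [Fintype Z] [Fintype W] [Nonempty X]

lemma JSD_le_supJSD (M N : Matrix Y X ℝ) (x : X) :
    JSD (fun y ↦ M y x) (fun y ↦ N y x) ≤ supJSD M N :=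
  le_sup' (fun x ↦ JSD (fun y ↦ M y x) (fun y ↦ N y x)) (mem_univ x)

lemma supJSD_nonneg (M N : Matrix Y X ℝ) : 0 ≤ supJSD M N :=
  (JSD_nonneg _ _).trans (JSD_le_supJSD M N (Classical.arbitrary X))

lemma supJSD_triangle {P Q R : Matrix Y X ℝ} (hP : ∀ y x, 0 ≤ P y x)
    (hQ : ∀ y x, 0 ≤ Q y x) (hR : ∀ y x, 0 ≤ R y x) :
    supJSD P R ≤ supJSD P Q + supJSD Q R :=
  sup'_le _ _ fun x _ ↦ (JSD_triangle (hP · x) (hQ · x) (hR · x)).trans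
    (add_le_add (JSD_le_supJSD P Q x) (JSD_le_supJSD Q R x))

lemma supJSD_mul_left_le {T : Matrix Z Y ℝ} (hT : IsColStoch T) {P Q : Matrix Y X ℝ}
    (hP : ∀ y x, 0 ≤ P y x) (hQ : ∀ y x, 0 ≤ Q y x) :
    supJSD (T * P) (T * Q) ≤ supJSD P Q :=
  sup'_le _ _ fun x _ ↦ (JSD_mulVec_le hT (hP · x) (hQ · x)).trans (JSD_le_supJSD P Q x)

lemma supJSD_mul_right_le [Nonempty W] {V : Matrix X W ℝ} (hV : IsColStoch V)
    {P Q : Matrix Y X ℝ} (hP : ∀ y x, 0 ≤ P y x) (hQ : ∀ y x, 0 ≤ Q y x) :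
    supJSD (P * V) (Q * V) ≤ supJSD P Q := by
  refine sup'_le _ _ fun w _ ↦ ?_
  rw [← pow_le_pow_iff_left₀ (JSD_nonneg _ _) (supJSD_nonneg P Q) two_ne_zero]
  calc JSD (P *ᵥ fun x ↦ V x w) (Q *ᵥ fun x ↦ V x w) ^ 2
      ≤ ∑ x, V x w * JSD (fun y ↦ P y x) (fun y ↦ Q y x) ^ 2 :=
        JSD_mulVec_sq_le hP hQ (hV.1 · w)
    _ ≤ ∑ x, V x w * supJSD P Q ^ 2 := by
        gcongr with x
        · exact hV.1 x w
        · exact JSD_nonneg _ _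
        · exact JSD_le_supJSD P Q x
    _ = supJSD P Q ^ 2 := by rw [← sum_mul, hV.2, one_mul]

end supJSD

section Matrix

variable {X Y Z : Type*} [Fintype X] [Fintype Y] [Fintype Z]

lemma IsColStoch.mul {A : Matrix Z Y ℝ} {B : Matrix Y X ℝ} (hA : IsColStoch A)
    (hB : IsColStoch B) : IsColStoch (A * B) := by
  refine ⟨fun z x ↦ sum_nonneg fun y _ ↦ mul_nonneg (hA.1 z y) (hB.1 y x), fun x ↦ ?_⟩
  simp only [mul_apply]
  rw [sum_comm]
  simp only [← sum_mul, hA.2, one_mul, hB.2]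

lemma IsAbsMatrix.isColStoch {α : Matrix Y X ℝ} (hα : IsAbsMatrix α) : IsColStoch α := by
  refine ⟨fun y x ↦ by rcases hα.1 y x with h | h <;> simp [h], fun x ↦ ?_⟩
  obtain ⟨y, hy, huniq⟩ := hα.2.1 x
  rw [sum_eq_single y (fun y' _ hy' ↦ (hα.1 y' x).resolve_right (hy' ∘ huniq y')) (by simp),
    hy]

lemma IsAbsMatrix.mul_transpose_self [DecidableEq Y] {α : Matrix Y X ℝ} (hα : IsAbsMatrix α) :
    α * αᵀ = diagonal fun y ↦ ∑ x, α y x := by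
  ext y y'
  rw [mul_apply, diagonal_apply]
  split_ifs with h
  · subst h
    refine sum_congr rfl fun x _ ↦ ?_
    rcases hα.1 y x with h | h <;> simp [h]
  · refine sum_eq_zero fun x _ ↦ ?_
    obtain ⟨_, _, huniq⟩ := hα.2.1 x
    rcases hα.1 y x with hy | hy
    · simp [hy]
    rcases hα.1 y' x with hy' | hy'
    · simp [hy']
    exact absurd ((huniq y hy).trans (huniq y' hy').symm) h

lemma IsAbsMatrix.pinv_isColStoch [DecidableEq Y] {α : Matrix Y X ℝ} (hα : IsAbsMatrix α) :
    IsColStoch (pinv α) := by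
  have hpos : ∀ y, 0 < ∑ x, α y x := fun y ↦ by
    obtain ⟨x, hx⟩ := hα.2.2 y
    have h := single_le_sum (fun x _ ↦ hα.isColStoch.1 y x) (mem_univ x)
    rw [hx] at h
    linarith
  have hinv : (α * αᵀ)⁻¹ = diagonal fun y ↦ (∑ x, α y x)⁻¹ := by
    refine inv_eq_right_inv ?_
    rw [hα.mul_transpose_self, diagonal_mul_diagonal, ← diagonal_one]
    exact congrArg diagonal (funext fun y ↦ mul_inv_cancel₀ (hpos y).ne')
  have hpinv : ∀ x y, pinv α x y = α y x * (∑ x, α y x)⁻¹ := fun x y ↦ by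
    rw [pinv, hinv, mul_diagonal, transpose_apply]
  refine ⟨fun x y ↦ ?_, fun y ↦ ?_⟩
  · rw [hpinv]
    exact mul_nonneg (hα.isColStoch.1 y x) (inv_nonneg.2 (hpos y).le)
  · simp only [hpinv, ← sum_mul]
    exact mul_inv_cancel₀ (hpos y).ne'

end Matrix

theorem isil_triangle_general {X X' X'' Y Y' Y'' : Type*}
    [Fintype X] [Fintype X'] [Nonempty X'] [Fintype X''] [Nonempty X'']
    [Fintype Y] [Fintype Y'] [Fintype Y'']
    [DecidableEq X'] [DecidableEq X'']
    (μ : Matrix Y X ℝ) (μ' : Matrix Y' X' ℝ) (μ'' : Matrix Y'' X'' ℝ)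
    (αX : Matrix X' X ℝ) (αY : Matrix Y' Y ℝ)
    (βX : Matrix X'' X' ℝ) (βY : Matrix Y'' Y' ℝ)
    (hμ : IsColStoch μ) (hμ' : IsColStoch μ') (hμ'' : IsColStoch μ'')
    (hαX : IsAbsMatrix αX) (hαY : IsAbsMatrix αY)
    (hβX : IsAbsMatrix βX) (hβY : IsAbsMatrix βY) :
    supJSD μ'' (βY * αY * μ * pinv αX * pinv βX)
      ≤ supJSD μ' (αY * μ * pinv αX) + supJSD μ'' (βY * μ' * pinv βX) := by
  set M := αY * μ * pinv αX
  have hM : IsColStoch M := (hαY.isColStoch.mul hμ).mul hαX.pinv_isColStoch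
  have hβY' := hβY.isColStoch
  have hβX' := hβX.pinv_isColStoch
  have hcomp : βY * αY * μ * pinv αX * pinv βX = βY * M * pinv βX := by
    simp only [M, Matrix.mul_assoc]
  rw [hcomp, add_comm]
  calc supJSD μ'' (βY * M * pinv βX)
      ≤ supJSD μ'' (βY * μ' * pinv βX) + supJSD (βY * μ' * pinv βX) (βY * M * pinv βX) :=
        supJSD_triangle hμ''.1 ((hβY'.mul hμ').mul hβX').1 ((hβY'.mul hM).mul hβX').1
    _ ≤ supJSD μ'' (βY * μ' * pinv βX) + supJSD μ' M := by
        gcongr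
        exact (supJSD_mul_right_le hβX' (hβY'.mul hμ').1 (hβY'.mul hM).1).trans
          (supJSD_mul_left_le hβY' hμ'.1 hM.1)

theorem isil_triangle {X X' X'' Y Y' Y'' : Type*}
    [Fintype X] [Nonempty X] [Fintype X'] [Nonempty X'] [Fintype X''] [Nonempty X'']
    [Fintype Y] [Nonempty Y] [Fintype Y'] [Nonempty Y'] [Fintype Y''] [Nonempty Y'']
    [DecidableEq X'] [DecidableEq X'']
    (μ : Matrix Y X ℝ) (μ' : Matrix Y' X' ℝ) (μ'' : Matrix Y'' X'' ℝ)
    (αX : Matrix X' X ℝ) (αY : Matrix Y' Y ℝ)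
    (βX : Matrix X'' X' ℝ) (βY : Matrix Y'' Y' ℝ)
    (hμ : IsColStoch μ) (hμ' : IsColStoch μ') (hμ'' : IsColStoch μ'')
    (hαX : IsAbsMatrix αX) (hαY : IsAbsMatrix αY)
    (hβX : IsAbsMatrix βX) (hβY : IsAbsMatrix βY) :
    supJSD μ'' (βY * αY * μ * pinv αX * pinv βX)
      ≤ supJSD μ' (αY * μ * pinv αX) + supJSD μ'' (βY * μ' * pinv βX) :=
  isil_triangle_general μ μ' μ'' αX αY βX βY hμ hμ' hμ'' hαX hαY hβX hβY
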